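/- arXiv:math/0106108 — 4 statements merged into one kernel-verified Lean document; each statement's English description precedes it below -/
import Mathlib

section
/- Suppose G acts primitively and effectively on X and A is a nontrivial abelian normal subgroup of G. Then A acts regularly (sharply transitively) on X and G is the semidirect product of the stabilizer G_x with A, i.e. G = G_x · A and G_x ∩ A = 1. -/
open Pointwise


/-- If `G` acts primitively and effectively on `X` and `A` is a nontrivial abelian
normal subgroup, then `A` acts regularly on `X` and `G = G_x ⋉ A`. -/
theorem stmt4 {G X : Type*} [Group G] [MulAction G X] [Nonempty X]
    (heff : ∀ g : G, (∀ x : X, g • x = x) → g = 1)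
    (htrans : ∀ x y : X, ∃ g : G, g • x = y)
    (hprim : ∀ x : X, IsCoatom (MulAction.stabilizer G x))
    (A : Subgroup G) (hA : A.Normal)
    (hAab : ∀ a b : G, a ∈ A → b ∈ A → a * b = b * a) (hAnt : A ≠ ⊥) :
    (∀ x y : X, ∃! a : A, (a : G) • x = y) ∧
    (∀ x : X, (∀ g : G, ∃ s ∈ MulAction.stabilizer G x, ∃ a ∈ A, g = s * a) ∧
      MulAction.stabilizer G x ⊓ A = ⊥) := by
  -- A is not contained in any stabilizer
  have hAns : ∀ x : X, ¬ A ≤ MulAction.stabilizer G x := by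
    intro x hle
    apply hAnt
    ext a
    simp only [Subgroup.mem_bot]
    constructor
    · intro ha
      apply heff
      intro y
      obtain ⟨g, hg⟩ := htrans x y
      have h1 : g⁻¹ * a * g ∈ A := hA.conj_mem' a ha g
      have h2 : (g⁻¹ * a * g) • x = x := MulAction.mem_stabilizer_iff.mp (hle h1)
      calc a • y = a • g • x := by rw [hg]
        _ = g • (g⁻¹ * a * g) • x := by
            simp only [smul_smul]; congr 1; group
        _ = g • x := by rw [h2]
        _ = y := hg
    · rintro rfl; exact A.one_mem
  have hsup : ∀ x : X, MulAction.stabilizer G x ⊔ A = ⊤ := by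
    intro x
    rcases lt_or_eq_of_le (le_sup_left : MulAction.stabilizer G x ≤ _ ⊔ A) with h | h
    · exact (hprim x).2 _ h
    · exact absurd (le_sup_right.trans h.ge) (hAns x)
  have hdecomp : ∀ (x : X) (g : G), ∃ s ∈ MulAction.stabilizer G x, ∃ a ∈ A, g = s * a := by
    intro x g
    have hg : g ∈ ((MulAction.stabilizer G x : Set G) * (A : Set G)) := by
      rw [← Subgroup.mul_normal, hsup x]
      exact Subgroup.mem_top g
    obtain ⟨s, hs, a, ha, hsa⟩ := hg
    exact ⟨s, hs, a, ha, hsa.symm⟩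
  have htransA : ∀ x y : X, ∃ a ∈ A, (a : G) • x = y := by
    intro x y
    obtain ⟨g, hg⟩ := htrans x y
    have hg' : g ∈ ((A : Set G) * (MulAction.stabilizer G x : Set G)) := by
      rw [← Subgroup.normal_mul, sup_comm, hsup x]
      exact Subgroup.mem_top g
    obtain ⟨a, ha, s, hs, has⟩ := hg'
    have has' : a * s = g := has
    refine ⟨a, ha, ?_⟩
    have hsx : s • x = x := MulAction.mem_stabilizer_iff.mp hs
    calc a • x = a • s • x := by rw [hsx]
      _ = (a * s) • x := (mul_smul a s x).symm
      _ = g • x := by rw [has']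
      _ = y := hg
  have hint : ∀ x : X, MulAction.stabilizer G x ⊓ A = ⊥ := by
    intro x
    ext a
    simp only [Subgroup.mem_inf, Subgroup.mem_bot]
    constructor
    · rintro ⟨hs, ha⟩
      apply heff
      intro y
      obtain ⟨b, hb, hbx⟩ := htransA x y
      have hsx : a • x = x := MulAction.mem_stabilizer_iff.mp hs
      calc a • y = a • b • x := by rw [hbx]
        _ = b • a • x := by rw [smul_smul, smul_smul, hAab a b ha hb]
        _ = b • x := by rw [hsx]
        _ = y := hbx
    · rintro rfl; exact ⟨one_mem _, one_mem _⟩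
  refine ⟨?_, fun x => ⟨hdecomp x, hint x⟩⟩
  intro x y
  obtain ⟨a, ha, hax⟩ := htransA x y
  refine ⟨⟨a, ha⟩, hax, ?_⟩
  rintro ⟨b, hb⟩ hbx
  have hmem : a⁻¹ * b ∈ MulAction.stabilizer G x ⊓ A := by
    refine ⟨MulAction.mem_stabilizer_iff.mpr ?_, A.mul_mem (A.inv_mem ha) hb⟩
    calc (a⁻¹ * b) • x = a⁻¹ • b • x := mul_smul _ _ _
      _ = a⁻¹ • a • x := by rw [hbx, hax]
      _ = x := inv_smul_smul a x
  rw [hint x, Subgroup.mem_bot] at hmem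
  ext
  exact (inv_mul_eq_one.mp hmem).symm
end

section
/- If G acts primitively and effectively on X and moreover G acts 2-transitively on X, and A is a nontrivial abelian normal subgroup of G, then the stabilizer G_x acts transitively by conjugation on the nonidentity elements of A. -/
/-- If `G` acts effectively and 2-transitively on `X` and `A` is a nontrivial
abelian normal subgroup of `G`, then `G_x` acts transitively by conjugation on
the nonidentity elements of `A`. -/
theorem stmt5 {G X : Type*} [Group G] [MulAction G X] [Nontrivial X]
    (heff : ∀ g : G, (∀ x : X, g • x = x) → g = 1)
    (h2 : ∀ x y x' y' : X, x ≠ y → x' ≠ y' → ∃ g : G, g • x = x' ∧ g • y = y')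
    (A : Subgroup G) (hA : A.Normal)
    (hAab : ∀ a b : G, a ∈ A → b ∈ A → a * b = b * a) (hAnt : A ≠ ⊥) :
    ∀ x : X, ∀ a b : G, a ∈ A → b ∈ A → a ≠ 1 → b ≠ 1 →
      ∃ g ∈ MulAction.stabilizer G x, g * a * g⁻¹ = b := by
  -- A is transitive
  obtain ⟨a0, ha0A, ha0⟩ : ∃ a0 ∈ A, a0 ≠ (1 : G) := by
    by_contra h
    push_neg at h
    exact hAnt (le_antisymm (fun a ha => h a ha) bot_le)
  obtain ⟨y, hy⟩ : ∃ y : X, a0 • y ≠ y := by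
    by_contra h
    push_neg at h
    exact ha0 (heff a0 h)
  have htrans : ∀ z w : X, ∃ c ∈ A, c • z = w := by
    intro z w
    by_cases hzw : z = w
    · exact ⟨1, A.one_mem, by simp [hzw]⟩
    · obtain ⟨g, hg1, hg2⟩ := h2 y (a0 • y) z w (Ne.symm hy) hzw
      refine ⟨g * a0 * g⁻¹, hA.conj_mem a0 ha0A g, ?_⟩
      rw [← hg1, ← hg2]
      simp [mul_smul]
  have hfree : ∀ c ∈ A, c ≠ (1 : G) → ∀ z : X, c • z ≠ z := by
    intro c hc hc1 z hz
    apply hc1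
    apply heff
    intro w
    obtain ⟨d, hdA, hd⟩ := htrans z w
    rw [← hd, ← mul_smul, hAab c d hc hdA, mul_smul, hz]
  intro x a b haA hbA ha hb
  obtain ⟨g, hg1, hg2⟩ := h2 x (a • x) x (b • x)
    (Ne.symm (hfree a haA ha x)) (Ne.symm (hfree b hbA hb x))
  refine ⟨g, hg1, ?_⟩
  by_contra hne
  have hcA : b⁻¹ * (g * a * g⁻¹) ∈ A :=
    A.mul_mem (A.inv_mem hbA) (hA.conj_mem a haA g)
  have hc1 : b⁻¹ * (g * a * g⁻¹) ≠ 1 := by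
    intro h
    exact hne (inv_mul_eq_one.mp h).symm
  apply hfree _ hcA hc1 x
  have : (g * a * g⁻¹) • x = b • x := by
    have hgx : g⁻¹ • x = x := by rw [inv_smul_eq_iff, hg1]
    rw [mul_smul, mul_smul, hgx, hg2]
  rw [mul_smul, this, inv_smul_smul]
end

section
/- Let X be a connected topological space and let Y = X × X \ Δ be the complement of the diagonal. If Y is not connected, then Y has exactly two connected components A and B, and the swap map ι(x,y) = (y,x) interchanges A and B. -/
open Set

namespace Stmt8Aux

variable {X : Type*} [TopologicalSpace X] [ConnectedSpace X]

/-- The slice of an open set is open. -/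
lemma slice_open (s : Set (X × X)) (hs : IsOpen s) (a : X) :
    IsOpen {x : X | (a, x) ∈ s} := hs.preimage (Continuous.prodMk_right a)

/-- Slices of a relatively clopen part of the off-diagonal are relatively closed
in the complement of the point. -/
lemma slice_closed (s s' : Set (X × X)) (hs' : IsOpen s')
    (hcov : ∀ p : X × X, p.1 ≠ p.2 → p ∈ s ∪ s')
    (hdisj : ∀ p : X × X, p.1 ≠ p.2 → p ∈ s → p ∈ s' → False)
    (a w : X) (hw : w ∈ closure {x : X | x ≠ a ∧ (a, x) ∈ s}) (hwa : w ≠ a) :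
    (a, w) ∈ s := by
  by_contra hns
  have hmem : (a, w) ∈ s' := by
    rcases hcov (a, w) (Ne.symm hwa) with h | h
    · exact absurd h hns
    · exact h
  rcases (mem_closure_iff.mp hw) _ (slice_open s' hs' a) hmem with ⟨x, hx1, hx2⟩
  exact hdisj (a, x) (Ne.symm hx2.1) hx2.2 hx1

/-- The slice together with its base point is preconnected. -/
lemma slice_conn (s s' : Set (X × X)) (hs : IsOpen s) (hs' : IsOpen s')
    (hcov : ∀ p : X × X, p.1 ≠ p.2 → p ∈ s ∪ s')
    (hdisj : ∀ p : X × X, p.1 ≠ p.2 → p ∈ s → p ∈ s' → False)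
    (a : X) :
    IsPreconnected (insert a {x : X | x ≠ a ∧ (a, x) ∈ s}) := by
  set T : Set X := insert a {x : X | x ≠ a ∧ (a, x) ∈ s} with hT
  have key : ∀ p q : Set X, IsOpen p → IsOpen q → T ⊆ p ∪ q →
      T ∩ (p ∩ q) = ∅ → a ∈ p → T ∩ q = ∅ := by
    intro p q hp hq hsub hpq hap
    by_contra hne
    rcases nonempty_iff_ne_empty.mpr hne with ⟨x₂, hx₂T, hx₂q⟩
    have hpq' : ∀ z, z ∈ T → z ∈ p → z ∈ q → False := fun z h1 h2 h3 =>
      (eq_empty_iff_forall_notMem.mp hpq z) ⟨h1, h2, h3⟩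
    have haq : a ∉ q := fun h => hpq' a (mem_insert a _) hap h
    set Q : Set X := {x : X | (a, x) ∈ s} ∩ q with hQdef
    have hQsub : Q ⊆ {x : X | x ≠ a ∧ (a, x) ∈ s} := by
      rintro x ⟨h1, h2⟩
      exact ⟨fun hxa => haq (hxa ▸ h2), h1⟩
    have hQopen : IsOpen Q := (slice_open s hs a).inter hq
    have hQne : Q.Nonempty := by
      rcases mem_insert_iff.mp hx₂T with h | h
      · exact absurd (h ▸ hx₂q) haq
      · exact ⟨x₂, h.2, hx₂q⟩
    have hQp : ∀ z ∈ p, z ∉ closure Q := by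
      intro z hz hcl
      rcases mem_closure_iff.mp hcl p hp hz with ⟨x, hxp, hxQ⟩
      exact hpq' x (mem_insert_of_mem _ (hQsub hxQ)) hxp hxQ.2
    have hQclosed : IsClosed Q := by
      apply isClosed_of_closure_subset
      intro w hwcl
      have hwS : w ∈ closure {x : X | x ≠ a ∧ (a, x) ∈ s} :=
        closure_mono hQsub hwcl
      have hwa : w ≠ a := fun h => hQp a hap (h ▸ hwcl)
      have hws : (a, w) ∈ s := slice_closed s s' hs' hcov hdisj a w hwS hwa
      have hwT : w ∈ T := mem_insert_of_mem _ ⟨hwa, hws⟩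
      rcases hsub hwT with h | h
      · exact absurd hwcl (hQp w h)
      · exact ⟨hws, h⟩
    rcases isClopen_iff.mp ⟨hQclosed, hQopen⟩ with h | h
    · rw [h] at hQne; exact not_nonempty_empty hQne
    · have : a ∈ Q := h ▸ mem_univ a
      exact haq this.2
  intro p q hp hq hsub hpne hqne
  by_contra hne
  have hpq : T ∩ (p ∩ q) = ∅ := not_nonempty_iff_eq_empty.mp hne
  rcases (hsub (mem_insert a _) : a ∈ p ∪ q) with hap | haq
  · rcases hqne with ⟨x, hx1, hx2⟩
    exact (eq_empty_iff_forall_notMem.mp (key p q hp hq hsub hpq hap) x) ⟨hx1, hx2⟩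
  · rcases hpne with ⟨x, hx1, hx2⟩
    have : T ∩ p = ∅ := key q p hq hp (by rwa [union_comm]) (by rwa [inter_comm q p]) haq
    exact (eq_empty_iff_forall_notMem.mp this x) ⟨hx1, hx2⟩

/-- A preconnected set avoiding `y` on which `s` holds somewhere (as a slice at `y`)
is entirely inside the `s`-slice at `y`. -/
lemma GP (s s' : Set (X × X)) (hs : IsOpen s) (hs' : IsOpen s')
    (hcov : ∀ p : X × X, p.1 ≠ p.2 → p ∈ s ∪ s')
    (hdisj : ∀ p : X × X, p.1 ≠ p.2 → p ∈ s → p ∈ s' → False)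
    (A : Set X) (hA : IsPreconnected A) (y : X) (hyA : y ∉ A)
    (w₀ : X) (hw₀A : w₀ ∈ A) (hw₀ : (y, w₀) ∈ s) :
    ∀ w ∈ A, (y, w) ∈ s := by
  by_contra hcon
  push_neg at hcon
  rcases hcon with ⟨w, hwA, hws⟩
  have hyw : ∀ w' ∈ A, y ≠ w' := fun w' hw' h => hyA (h ▸ hw')
  have hws' : (y, w) ∈ s' := by
    rcases hcov (y, w) (hyw w hwA) with h | h
    · exact absurd h hws
    · exact h
  rcases hA {x | (y, x) ∈ s} {x | (y, x) ∈ s'} (slice_open s hs y) (slice_open s' hs' y)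
      (fun x hx => hcov (y, x) (hyw x hx))
      ⟨w₀, hw₀A, hw₀⟩ ⟨w, hwA, hws'⟩ with ⟨x, hxA, hx1, hx2⟩
  exact hdisj (y, x) (hyw x hxA) hx1 hx2

/-- Transitivity for a symmetric relatively clopen part. -/
lemma strans (s s' : Set (X × X)) (hs : IsOpen s) (hs' : IsOpen s')
    (hcov : ∀ p : X × X, p.1 ≠ p.2 → p ∈ s ∪ s')
    (hdisj : ∀ p : X × X, p.1 ≠ p.2 → p ∈ s → p ∈ s' → False)
    (hsym : ∀ p : X × X, p.1 ≠ p.2 → p ∈ s → (p.2, p.1) ∈ s)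
    {x y z : X} (hxy : x ≠ y) (hyz : y ≠ z) (hxz : x ≠ z)
    (h1 : (x, y) ∈ s) (h2 : (y, z) ∈ s) : (x, z) ∈ s := by
  by_contra hc
  have hc' : (x, z) ∈ s' := by
    rcases hcov (x, z) hxz with h | h
    · exact absurd h hc
    · exact h
  have hzx' : (z, x) ∈ s' := by
    rcases hcov (z, x) (Ne.symm hxz) with h | h
    · exact absurd (hsym (z, x) (Ne.symm hxz) h) hc
    · exact h
  have hA2 : IsPreconnected (insert x {w : X | w ≠ x ∧ (x, w) ∈ s}) :=
    slice_conn s s' hs hs' hcov hdisj x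
  have hzA2 : z ∉ insert x {w : X | w ≠ x ∧ (x, w) ∈ s} := by
    intro h
    rcases mem_insert_iff.mp h with h | h
    · exact hxz h.symm
    · exact hdisj (x, z) hxz h.2 hc'
  have call := GP s' s hs' hs
    (fun p hp => (hcov p hp).elim Or.inr Or.inl)
    (fun p hp h1 h2 => hdisj p hp h2 h1)
    _ hA2 z hzA2 x (mem_insert _ _) hzx'
  have hyA2 : y ∈ insert x {w : X | w ≠ x ∧ (x, w) ∈ s} :=
    mem_insert_of_mem _ ⟨Ne.symm hxy, h1⟩
  exact hdisj (z, y) (Ne.symm hyz) (hsym (y, z) hyz h2) (call y hyA2)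

/-- A nonempty symmetric relatively clopen part of the off-diagonal is everything. -/
lemma crux (s s' : Set (X × X)) (hs : IsOpen s) (hs' : IsOpen s')
    (hcov : ∀ p : X × X, p.1 ≠ p.2 → p ∈ s ∪ s')
    (hdisj : ∀ p : X × X, p.1 ≠ p.2 → p ∈ s → p ∈ s' → False)
    (hsym : ∀ p : X × X, p.1 ≠ p.2 → p ∈ s → (p.2, p.1) ∈ s)
    (x₀ y₀ : X) (hxy₀ : x₀ ≠ y₀) (h₀ : (x₀, y₀) ∈ s)
    (s₁ t₁ : X) (hst₁ : s₁ ≠ t₁) (h₁ : (s₁, t₁) ∈ s') : False := by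
  set C : Set X := insert x₀ {w : X | w ≠ x₀ ∧ (x₀, w) ∈ s} with hCdef
  have hx₀C : x₀ ∈ C := mem_insert _ _
  have hy₀C : y₀ ∈ C := mem_insert_of_mem _ ⟨Ne.symm hxy₀, h₀⟩
  have hC : ∀ z ∈ C, ∀ w, w ∈ C ↔ (w = z ∨ (w ≠ z ∧ (z, w) ∈ s)) := by
    intro z hz w
    rcases mem_insert_iff.mp hz with hz0 | hz0
    · subst hz0
      constructor
      · intro hw
        rcases mem_insert_iff.mp hw with h | h
        · exact Or.inl h
        · exact Or.inr ⟨h.1, h.2⟩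
      · rintro (h | h)
        · rw [h]; exact hz
        · exact mem_insert_of_mem _ ⟨h.1, h.2⟩
    · constructor
      · intro hw
        by_cases hwz : w = z
        · exact Or.inl hwz
        refine Or.inr ⟨hwz, ?_⟩
        rcases mem_insert_iff.mp hw with h | h
        · rw [h]
          exact hsym (x₀, z) (Ne.symm hz0.1) hz0.2
        · exact strans s s' hs hs' hcov hdisj hsym hz0.1 (Ne.symm h.1) (Ne.symm hwz)
            (hsym (x₀, z) (Ne.symm hz0.1) hz0.2) h.2
      · rintro (h | h)
        · rw [h]; exact hz
        · by_cases hwx : w = x₀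
          · rw [hwx]; exact hx₀C
          · refine mem_insert_of_mem _ ⟨hwx, ?_⟩
            exact strans s s' hs hs' hcov hdisj hsym (Ne.symm hz0.1) (Ne.symm h.1)
              (Ne.symm hwx) hz0.2 h.2
  have hnotuniv : ∃ c', c' ∉ C := by
    by_contra hall
    push_neg at hall
    rcases (hC s₁ (hall s₁) t₁).mp (hall t₁) with h | h
    · exact hst₁ h.symm
    · exact hdisj (s₁, t₁) hst₁ h.2 h₁
  rcases hnotuniv with ⟨c', hc'⟩
  have hCopen : IsOpen C := by
    rw [isOpen_iff_forall_mem_open]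
    intro c hc
    by_cases hcx : c = x₀
    · refine ⟨{w | (y₀, w) ∈ s}, ?_, slice_open s hs y₀, ?_⟩
      · intro w hw
        by_cases hwy : w = y₀
        · rw [hwy]; exact hy₀C
        · exact (hC y₀ hy₀C w).mpr (Or.inr ⟨hwy, hw⟩)
      · rcases (hC y₀ hy₀C c).mp hc with h | h
        · exact absurd (hcx.symm.trans h) hxy₀
        · exact h.2
    · refine ⟨{w | (x₀, w) ∈ s}, ?_, slice_open s hs x₀, ?_⟩
      · intro w hw
        by_cases hwx : w = x₀
        · rw [hwx]; exact hx₀C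
        · exact (hC x₀ hx₀C w).mpr (Or.inr ⟨hwx, hw⟩)
      · rcases (hC x₀ hx₀C c).mp hc with h | h
        · exact absurd h hcx
        · exact h.2
  have hcompl : ∀ z ∈ C, ∀ w, w ∉ C ↔ (w ≠ z ∧ (z, w) ∈ s') := by
    intro z hz w
    rw [hC z hz w]
    constructor
    · intro h
      push_neg at h
      rcases h with ⟨h1, h2⟩
      refine ⟨h1, ?_⟩
      have hzw : (z, w) ∉ s := h2 h1
      rcases hcov (z, w) (fun he => h1 he.symm) with hh | hh
      · exact absurd hh hzw
      · exact hh
    · rintro ⟨h1, h2⟩ (h | h)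
      · exact h1 h
      · exact hdisj (z, w) (Ne.symm h1) h.2 h2
  have e1 : Cᶜ = {x : X | x ≠ x₀ ∧ (x₀, x) ∈ s'} := by
    ext w; simp only [mem_compl_iff]; exact hcompl x₀ hx₀C w
  have e2 : Cᶜ = {x : X | x ≠ y₀ ∧ (y₀, x) ∈ s'} := by
    ext w; simp only [mem_compl_iff]; exact hcompl y₀ hy₀C w
  have hDopen : IsOpen Cᶜ := by
    rw [isOpen_iff_forall_mem_open]
    intro w hw
    refine ⟨{x | (x₀, x) ∈ s'} ∩ {x | (y₀, x) ∈ s'}, ?_,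
      (slice_open s' hs' x₀).inter (slice_open s' hs' y₀), ?_, ?_⟩
    · rintro w' ⟨hw1, hw2⟩
      by_cases hwx : w' = x₀
      · exact absurd (hsym (x₀, y₀) hxy₀ h₀) (fun hh =>
          hdisj (y₀, x₀) (Ne.symm hxy₀) hh (hwx ▸ hw2))
      · exact (hcompl x₀ hx₀C w').mpr ⟨hwx, hw1⟩
    · exact ((hcompl x₀ hx₀C w).mp hw).2
    · exact ((hcompl y₀ hy₀C w).mp hw).2
  have hDclosed : IsClosed Cᶜ := by
    apply isClosed_of_closure_subset
    intro w hw
    by_cases hwx : w = x₀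
    · rw [e2] at hw ⊢
      have hwy : w ≠ y₀ := by rw [hwx]; exact hxy₀
      exact ⟨hwy, slice_closed s' s hs
        (fun p hp => (hcov p hp).elim Or.inr Or.inl)
        (fun p hp ha hb => hdisj p hp hb ha) y₀ w hw hwy⟩
    · rw [e1] at hw ⊢
      exact ⟨hwx, slice_closed s' s hs
        (fun p hp => (hcov p hp).elim Or.inr Or.inl)
        (fun p hp ha hb => hdisj p hp hb ha) x₀ w hw hwx⟩
  rcases isClopen_iff.mp ⟨hDclosed, hDopen⟩ with h | h
  · exact (eq_empty_iff_forall_notMem.mp h c') hc'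
  · have : x₀ ∈ Cᶜ := h ▸ mem_univ x₀
    exact this hx₀C

/-- The key lemma: a separation of the off-diagonal is interchanged by the swap. -/
lemma key (s s' : Set (X × X)) (hs : IsOpen s) (hs' : IsOpen s')
    (hcov : ∀ p : X × X, p.1 ≠ p.2 → p ∈ s ∪ s')
    (hdisj : ∀ p : X × X, p.1 ≠ p.2 → p ∈ s → p ∈ s' → False)
    (hne : ∃ p : X × X, p.1 ≠ p.2 ∧ p ∈ s)
    (hne' : ∃ p : X × X, p.1 ≠ p.2 ∧ p ∈ s') :
    ∀ p : X × X, p.1 ≠ p.2 → (p ∈ s ↔ (p.2, p.1) ∈ s') := by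
  have main : ∀ t t' : Set (X × X), IsOpen t → IsOpen t' →
      (∀ p : X × X, p.1 ≠ p.2 → p ∈ t ∪ t') →
      (∀ p : X × X, p.1 ≠ p.2 → p ∈ t → p ∈ t' → False) →
      (∃ p : X × X, p.1 ≠ p.2 ∧ p ∈ t') →
      ∀ p : X × X, p.1 ≠ p.2 → p ∈ t → (p.2, p.1) ∈ t → False := by
    intro t t' ht ht' hc hd htne' p hp hpt hpt'
    rcases htne' with ⟨q, hq1, hq2⟩
    refine crux (t ∩ Prod.swap ⁻¹' t) (t' ∪ t ∩ Prod.swap ⁻¹' t')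
      (ht.inter (ht.preimage continuous_swap))
      (ht'.union (ht.inter (ht'.preimage continuous_swap)))
      ?_ ?_ ?_ p.1 p.2 hp ⟨hpt, hpt'⟩ q.1 q.2 hq1 (Or.inl hq2)
    · intro z hz
      rcases hc z hz with h | h
      · rcases hc (z.2, z.1) (Ne.symm hz) with h2 | h2
        · exact Or.inl ⟨h, h2⟩
        · exact Or.inr (Or.inr ⟨h, h2⟩)
      · exact Or.inr (Or.inl h)
    · intro z hz h1 h2
      rcases h2 with h2 | h2
      · exact hd z hz h1.1 h2
      · exact hd (z.2, z.1) (Ne.symm hz) h1.2 h2.2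
    · intro z hz h
      exact ⟨h.2, h.1⟩
  intro p hp
  constructor
  · intro hps
    rcases hcov (p.2, p.1) (Ne.symm hp) with h | h
    · exact (main s s' hs hs' hcov hdisj hne' p hp hps h).elim
    · exact h
  · intro hps'
    rcases hcov p hp with h | h
    · exact h
    · exact (main s' s hs' hs
        (fun z hz => (hcov z hz).elim Or.inr Or.inl)
        (fun z hz ha hb => hdisj z hz hb ha)
        hne p hp h hps').elim

end Stmt8Aux

/-- If `X` is connected and the complement `Y` of the diagonal in `X × X` is not
connected, then `Y` has precisely two (necessarily open) components, which are
interchanged by the coordinate swap. -/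
theorem stmt8 {X : Type*} [TopologicalSpace X] [ConnectedSpace X]
    (Y : Set (X × X)) (hY : Y = {p : X × X | p.1 ≠ p.2})
    (hdisc : ¬ IsPreconnected Y) :
    ∃ A B : Set (X × X), A.Nonempty ∧ B.Nonempty ∧ A ∪ B = Y ∧ Disjoint A B ∧
      IsConnected A ∧ IsConnected B ∧
      IsOpen (Subtype.val ⁻¹' A : Set Y) ∧ IsOpen (Subtype.val ⁻¹' B : Set Y) ∧
      Prod.swap '' A = B := by
  subst hY
  unfold IsPreconnected at hdisc
  push_neg at hdisc
  obtain ⟨u, v, hu, hv, hsub, hYu, hYv, hempty⟩ := hdisc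
  have hcov : ∀ p : X × X, p.1 ≠ p.2 → p ∈ u ∪ v := fun p hp => hsub hp
  have hdisj : ∀ p : X × X, p.1 ≠ p.2 → p ∈ u → p ∈ v → False := fun p hp h1 h2 =>
    (Set.eq_empty_iff_forall_notMem.mp hempty p) ⟨hp, h1, h2⟩
  obtain ⟨p₀, hp₀Y, hp₀u⟩ := hYu
  obtain ⟨q₀, hq₀Y, hq₀v⟩ := hYv
  have hne : ∃ p : X × X, p.1 ≠ p.2 ∧ p ∈ u := ⟨p₀, hp₀Y, hp₀u⟩
  have hne' : ∃ p : X × X, p.1 ≠ p.2 ∧ p ∈ v := ⟨q₀, hq₀Y, hq₀v⟩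
  have hiff := Stmt8Aux.key u v hu hv hcov hdisj hne hne'
  set Yd : Set (X × X) := {p : X × X | p.1 ≠ p.2} with hYd
  have hAB : Prod.swap '' (Yd ∩ u) = Yd ∩ v := by
    ext q
    constructor
    · rintro ⟨⟨c, d⟩, ⟨hcd, hcdu⟩, rfl⟩
      have hcd' : c ≠ d := hcd
      exact ⟨Ne.symm hcd', (hiff (c, d) hcd').mp hcdu⟩
    · rintro ⟨hq1, hq2⟩
      refine ⟨(q.2, q.1), ⟨Ne.symm hq1, ?_⟩, rfl⟩
      exact (hiff (q.2, q.1) (Ne.symm hq1)).mpr hq2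
  have hApre : IsPreconnected (Yd ∩ u) := by
    intro p q hpo hqo hsub2 hne1 hne2
    by_contra hcon
    have hem : ∀ z, z ∈ Yd ∩ u → z ∈ p → z ∈ q → False := fun z h1 h2 h3 =>
      hcon ⟨z, h1, h2, h3⟩
    obtain ⟨w1, ⟨hw1Y, hw1u⟩, hw1p⟩ := hne1
    obtain ⟨⟨a, b⟩, ⟨habY, habu⟩, habq⟩ := hne2
    have habY' : a ≠ b := habY
    have hcov2 : ∀ z : X × X, z.1 ≠ z.2 → z ∈ (u ∩ p) ∪ ((u ∩ q) ∪ v) := by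
      intro z hz
      rcases hcov z hz with h | h
      · rcases hsub2 ⟨hz, h⟩ with h2 | h2
        · exact Or.inl ⟨h, h2⟩
        · exact Or.inr (Or.inl ⟨h, h2⟩)
      · exact Or.inr (Or.inr h)
    have hdisj2 : ∀ z : X × X, z.1 ≠ z.2 → z ∈ u ∩ p → z ∈ (u ∩ q) ∪ v → False := by
      rintro z hz ⟨h1, h2⟩ (⟨h3, h4⟩ | h3)
      · exact hem z ⟨hz, h1⟩ h2 h4
      · exact hdisj z hz h1 h3
    have hiff2 := Stmt8Aux.key (u ∩ p) ((u ∩ q) ∪ v) (hu.inter hpo) ((hu.inter hqo).union hv)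
      hcov2 hdisj2 ⟨w1, hw1Y, hw1u, hw1p⟩ ⟨(a, b), habY', Or.inl ⟨habu, habq⟩⟩
    have hba : (b, a) ∈ u ∩ p :=
      (hiff2 (b, a) (Ne.symm habY')).mpr (Or.inl ⟨habu, habq⟩)
    have hbav : (b, a) ∈ v := (hiff (a, b) habY').mp habu
    exact hdisj (b, a) (Ne.symm habY') hba.1 hbav
  refine ⟨Yd ∩ u, Yd ∩ v, ⟨p₀, hp₀Y, hp₀u⟩, ⟨q₀, hq₀Y, hq₀v⟩, ?_, ?_, ?_, ?_, ?_, ?_, ?_⟩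
  · ext z
    constructor
    · rintro (⟨h1, _⟩ | ⟨h1, _⟩) <;> exact h1
    · intro hz
      rcases hcov z hz with h | h
      · exact Or.inl ⟨hz, h⟩
      · exact Or.inr ⟨hz, h⟩
  · rw [Set.disjoint_left]
    rintro z ⟨h1, h2⟩ ⟨h3, h4⟩
    exact hdisj z h1 h2 h4
  · exact ⟨⟨p₀, hp₀Y, hp₀u⟩, hApre⟩
  · rw [← hAB]
    have hAconn : IsConnected (Yd ∩ u) := ⟨⟨p₀, hp₀Y, hp₀u⟩, hApre⟩
    exact hAconn.image _ continuous_swap.continuousOn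
  · have he : (Subtype.val ⁻¹' (Yd ∩ u) : Set Yd) = Subtype.val ⁻¹' u := by
      ext z
      simp only [Set.mem_preimage, Set.mem_inter_iff, iff_self_and, and_iff_right_iff_imp]
      exact fun _ => z.2
    rw [he]
    exact hu.preimage continuous_subtype_val
  · have he : (Subtype.val ⁻¹' (Yd ∩ v) : Set Yd) = Subtype.val ⁻¹' v := by
      ext z
      simp only [Set.mem_preimage, Set.mem_inter_iff, iff_self_and, and_iff_right_iff_imp]
      exact fun _ => z.2
    rw [he]
    exact hv.preimage continuous_subtype_val
  · exact hAB
end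

section
/- Let (W, S) be an irreducible Coxeter system with S indexed by a set I, and let J ⊆ I be such that W acts 2-transitively on the coset space W/W_J. Then I \ J is a singleton {i}, i.e. W = W_J ∪ W_J s_i W_J. -/
/-!
If `W` is 2-transitive on `W/W_J`, then `W_J` acts transitively on the cosets different from
`W_J`, so `W = W_J ∪ W_J w W_J` for every `w ∉ W_J`; for `w = s i` with `i ∉ J` this is the
decomposition. A second index `j ∉ J`, `j ≠ i`, would give `s j ∈ W_J s i W_J ⊆ W_{J ∪ {i}}`,
contradicting the fact that `s j ∉ W_K` whenever `j ∉ K`. That fact is read off the geometric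
representation on `ℝ^(B)`: every `s k` with `k ≠ j` preserves the `j`-th coordinate, whereas
`s j` negates `e j`.
-/

open Real

namespace CoxeterMatrix

variable {B : Type*} (M : CoxeterMatrix B)

/-- An entry `M i j = 0` stands for `m = ∞`; then `π / 0 = 0` gives `-cos 0 = -1`, the right
value. -/
noncomputable def cosForm (i j : B) : ℝ := -cos (π / M i j)

theorem cosForm_self (i : B) : M.cosForm i i = 1 := by
  simp [cosForm]

theorem cosForm_comm (i j : B) : M.cosForm i j = M.cosForm j i := by
  rw [cosForm, cosForm, M.symmetric]

noncomputable def rootPairing (i : B) : (B →₀ ℝ) →ₗ[ℝ] ℝ :=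
  Finsupp.linearCombination ℝ (M.cosForm i)

@[simp]
theorem rootPairing_single (i j : B) (a : ℝ) :
    M.rootPairing i (Finsupp.single j a) = a * M.cosForm i j := by
  simp [rootPairing, Finsupp.linearCombination_single]

noncomputable def geomReflection (i : B) : Module.End ℝ (B →₀ ℝ) :=
  LinearMap.id - (2 : ℝ) • (M.rootPairing i).smulRight (Finsupp.single i 1)

theorem geomReflection_apply (i : B) (v : B →₀ ℝ) :
    M.geomReflection i v = v - (2 * M.rootPairing i v) • Finsupp.single i 1 := by
  simp [geomReflection]

theorem geomReflection_mul_self (i : B) : M.geomReflection i * M.geomReflection i = 1 := by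
  refine LinearMap.ext fun v => ?_
  simp only [Module.End.mul_apply, geomReflection_apply, map_sub, map_smul, rootPairing_single,
    cosForm_self, Module.End.one_apply]
  module

theorem geomReflection_apply_apply_of_ne {i j : B} (hij : i ≠ j) (v : B →₀ ℝ) :
    M.geomReflection i v j = v j := by
  simp [geomReflection_apply, hij]

/-- The plane spanned by `e i, e j` and the common kernel of their pairings are complementary
as soon as the Gram determinant `1 - c ^ 2` of the plane is nonzero. -/
theorem eq_one_of_fixes_plane_and_kernel {i j : B} (hc : M.cosForm i j ^ 2 ≠ 1)
    {f : Module.End ℝ (B →₀ ℝ)} (hi : f (Finsupp.single i 1) = Finsupp.single i 1)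
    (hj : f (Finsupp.single j 1) = Finsupp.single j 1)
    (hker : ∀ v, M.rootPairing i v = 0 → M.rootPairing j v = 0 → f v = v) : f = 1 := by
  refine LinearMap.ext fun v => ?_
  set c := M.cosForm i j
  have hd : 1 - c ^ 2 ≠ 0 := sub_ne_zero.mpr (Ne.symm hc)
  set a := (M.rootPairing i v - c * M.rootPairing j v) / (1 - c ^ 2)
  set b := (M.rootPairing j v - c * M.rootPairing i v) / (1 - c ^ 2)
  set w := v - a • Finsupp.single i 1 - b • Finsupp.single j 1
  have hji : M.cosForm j i = c := M.cosForm_comm j i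
  have hwi : M.rootPairing i w = 0 := by
    simp only [w, a, b, map_sub, map_smul, rootPairing_single, cosForm_self, smul_eq_mul]
    field_simp
    ring
  have hwj : M.rootPairing j w = 0 := by
    simp only [w, a, b, map_sub, map_smul, rootPairing_single, cosForm_self, hji, smul_eq_mul]
    field_simp
    ring
  have hv : v = w + a • Finsupp.single i 1 + b • Finsupp.single j 1 := by
    simp only [w]; abel
  rw [Module.End.one_apply, hv, map_add, map_add, map_smul, map_smul, hi, hj, hker w hwi hwj]

theorem geomReflection_mul_pow_eq_one {i j : B} (hij : i ≠ j) (hm : M i j ≠ 0) :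
    (M.geomReflection i * M.geomReflection j) ^ M i j = 1 := by
  set m := M i j
  have hm2 : (2 : ℝ) ≤ m := by
    have := M.off_diagonal i j hij
    exact_mod_cast (show 2 ≤ m by omega)
  set θ := π / m
  have hθ_pos : 0 < θ := by positivity
  have hθ_lt : θ < π := by
    rw [div_lt_iff₀ (by linarith)]
    nlinarith [pi_pos]
  have hsin : sin θ ≠ 0 := (sin_pos_of_pos_of_lt_pi hθ_pos hθ_lt).ne'
  have hij_cos : M.cosForm i j = -cos θ := rfl
  have hji_cos : M.cosForm j i = -cos θ := by rw [M.cosForm_comm, hij_cos]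
  have sin_add_two_mul (x : ℝ) : sin (x + 2 * θ) = 2 * cos θ * sin (x + θ) - sin x := by
    rw [sin_add, sin_add, cos_two_mul, sin_two_mul]; ring
  set P := M.geomReflection i * M.geomReflection j
  -- On the plane of `e i, e j`, `P` is a rotation by `2θ`; along the curve `u` it is `x ↦ x + 2θ`.
  set u : ℝ → B →₀ ℝ := fun x => sin (x + θ) • Finsupp.single i 1 + sin x • Finsupp.single j 1
  have hstep (x : ℝ) : P (u x) = u (x + 2 * θ) := by
    have h1 := sin_add_two_mul x
    have h2 := sin_add_two_mul (x + θ)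
    rw [show x + θ + 2 * θ = x + 2 * θ + θ by ring, show x + θ + θ = x + 2 * θ by ring] at h2
    simp only [P, u, Module.End.mul_apply, geomReflection_apply, map_add, map_sub, map_smul,
      rootPairing_single, cosForm_self, hij_cos, hji_cos, h1, h2]
    module
  have hpow (k : ℕ) (x : ℝ) : (P ^ k) (u x) = u (x + k * (2 * θ)) := by
    induction k generalizing x with
    | zero => simp
    | succ k ih => rw [pow_succ, Module.End.mul_apply, hstep, ih]; push_cast; ring_nf
  have hperiod (x : ℝ) : (P ^ m) (u x) = u x := by
    have h2π : x + m * (2 * θ) = x + 2 * π := by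
      simp only [θ]; field_simp
    rw [hpow, h2π]
    simp only [u, sin_add_two_pi, show x + 2 * π + θ = x + θ + 2 * π by ring]
  have hcos : M.cosForm i j ^ 2 ≠ 1 := by
    intro h
    rw [hij_cos, neg_sq] at h
    have := sin_sq_add_cos_sq θ
    exact hsin (pow_eq_zero_iff two_ne_zero |>.mp (by linarith))
  apply M.eq_one_of_fixes_plane_and_kernel hcos
  · have h := hperiod 0
    simp only [u, zero_add, sin_zero, zero_smul, add_zero, map_smul] at h
    exact smul_right_injective _ hsin h
  · have h := hperiod (-θ)
    simp only [u, neg_add_cancel, sin_zero, zero_smul, zero_add, sin_neg, map_smul] at h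
    exact smul_right_injective _ (neg_ne_zero.mpr hsin) h
  · intro v hvi hvj
    have hfix : P v = v := by
      simp [P, geomReflection_apply, hvi, hvj]
    rw [Module.End.pow_apply, Function.iterate_fixed hfix]

theorem isLiftable_geomReflection : M.IsLiftable M.geomReflection := by
  intro i j
  by_cases hij : i = j
  · rw [hij, M.diagonal, pow_one, geomReflection_mul_self]
  by_cases hm : M i j = 0
  · rw [hm, pow_zero]
  exact M.geomReflection_mul_pow_eq_one hij hm

end CoxeterMatrix

def MonoidHom.dualStabilizer {G R V : Type*} [Group G] [CommSemiring R] [AddCommMonoid V]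
    [Module R V] (ρ : G →* Module.End R V) (φ : V →ₗ[R] R) : Subgroup G where
  carrier := {g | ∀ v, φ (ρ g v) = φ v}
  mul_mem' {g h} hg hh v := by rw [map_mul, Module.End.mul_apply, hg, hh]
  one_mem' v := by rw [map_one, Module.End.one_apply]
  inv_mem' {g} hg v := by
    rw [← hg, ← Module.End.mul_apply, ← map_mul, mul_inv_cancel, map_one, Module.End.one_apply]

namespace CoxeterSystem

variable {B W : Type*} [Group W] {M : CoxeterMatrix B} (cs : CoxeterSystem M W)

noncomputable def geomRep : W →* Module.End ℝ (B →₀ ℝ) :=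
  cs.lift ⟨M.geomReflection, M.isLiftable_geomReflection⟩

theorem simple_notMem_closure_simple_image {K : Set B} {j : B} (hj : j ∉ K) :
    cs.simple j ∉ Subgroup.closure (cs.simple '' K) := by
  have hle :
      Subgroup.closure (cs.simple '' K) ≤ cs.geomRep.dualStabilizer (Finsupp.lapply j) := by
    rw [Subgroup.closure_le, Set.image_subset_iff]
    intro k hk v
    have hkj : k ≠ j := fun h => hj (h ▸ hk)
    simp [geomRep, cs.lift_apply_simple, M.geomReflection_apply_apply_of_ne hkj]
  intro hmem
  have h := hle hmem (Finsupp.single j 1)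
  simp [geomRep, cs.lift_apply_simple, M.geomReflection_apply, M.cosForm_self] at h

end CoxeterSystem

theorem exists_mem_mul_mul_eq_of_twoTransitive {G : Type*} [Group G] {H : Subgroup G}
    (h2 : ∀ x₁ x₂ y₁ y₂ : G ⧸ H, x₁ ≠ x₂ → y₁ ≠ y₂ → ∃ g : G, g • x₁ = y₁ ∧ g • x₂ = y₂)
    {g g' : G} (hg : g ∉ H) (hg' : g' ∉ H) : ∃ u ∈ H, ∃ v ∈ H, g' = u * g * v := by
  have hne {x : G} (hx : x ∉ H) : ((1 : G) : G ⧸ H) ≠ x := by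
    rwa [ne_eq, QuotientGroup.eq, inv_one, one_mul]
  obtain ⟨u, hu1, hu2⟩ := h2 _ _ _ _ (hne hg) (hne hg')
  rw [MulAction.Quotient.smul_mk, smul_eq_mul, mul_one, eq_comm, QuotientGroup.eq, inv_one,
    one_mul] at hu1
  rw [MulAction.Quotient.smul_mk, smul_eq_mul, QuotientGroup.eq] at hu2
  exact ⟨u, hu1, _, hu2, by group⟩

theorem stmt14_general {B W : Type*} [Group W] {M : CoxeterMatrix B}
    (cs : CoxeterSystem M W)
    (J : Set B) (hJ : J ≠ Set.univ)
    (WJ : Subgroup W) (hWJ : WJ = Subgroup.closure (cs.simple '' J))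
    (h2 : ∀ x₁ x₂ y₁ y₂ : W ⧸ WJ, x₁ ≠ x₂ → y₁ ≠ y₂ →
      ∃ w : W, w • x₁ = y₁ ∧ w • x₂ = y₂) :
    ∃ i : B, i ∉ J ∧ (∀ j : B, j ∉ J → j = i) ∧
      ∀ w : W, w ∈ WJ ∨ ∃ u ∈ WJ, ∃ v ∈ WJ, w = u * cs.simple i * v := by
  obtain ⟨i, hi⟩ := (Set.ne_univ_iff_exists_notMem J).mp hJ
  subst hWJ
  have hsi := cs.simple_notMem_closure_simple_image hi
  refine ⟨i, hi, fun j hj => ?_, fun w => or_iff_not_imp_left.mpr fun hw =>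
    exists_mem_mul_mul_eq_of_twoTransitive h2 hsi hw⟩
  by_contra hji
  obtain ⟨u, hu, v, hv, hsj⟩ :=
    exists_mem_mul_mul_eq_of_twoTransitive h2 hsi (cs.simple_notMem_closure_simple_image hj)
  have hle : Subgroup.closure (cs.simple '' J) ≤ Subgroup.closure (cs.simple '' insert i J) :=
    Subgroup.closure_mono (Set.image_mono (Set.subset_insert i J))
  refine cs.simple_notMem_closure_simple_image (K := insert i J) (j := j) (by simp [hji, hj]) ?_
  rw [hsj]
  exact mul_mem (mul_mem (hle hu) (Subgroup.subset_closure ⟨i, Set.mem_insert i J, rfl⟩)) (hle hv)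

/-- If `(W,S)` is an irreducible Coxeter system and `W` acts 2-transitively on
`W/W_J`, then `I \ J` is a singleton `{i}`, i.e. `W = W_J ∪ W_J s_i W_J`. -/
theorem stmt14 {B W : Type*} [Group W] {M : CoxeterMatrix B}
    (cs : CoxeterSystem M W)
    (hirr : ∀ K : Set B, (∀ i ∈ K, ∀ j ∉ K, M i j = 2) → K = ∅ ∨ K = Set.univ)
    (J : Set B) (hJ : J ≠ Set.univ)
    (WJ : Subgroup W) (hWJ : WJ = Subgroup.closure (cs.simple '' J))
    (h2 : ∀ x₁ x₂ y₁ y₂ : W ⧸ WJ, x₁ ≠ x₂ → y₁ ≠ y₂ →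
      ∃ w : W, w • x₁ = y₁ ∧ w • x₂ = y₂) :
    ∃ i : B, i ∉ J ∧ (∀ j : B, j ∉ J → j = i) ∧
      ∀ w : W, w ∈ WJ ∨ ∃ u ∈ WJ, ∃ v ∈ WJ, w = u * cs.simple i * v :=
  stmt14_general cs J hJ WJ hWJ h2
end
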